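/- (Heralded Bell/path-length-1 graph state from the sculpting protocol.) Consider modes 1 and 2, each with internal levels + and − (variables X_{1,±}, X_{2,±}), and three ancillary single-level modes A, B, C (variables X_A, X_B, X_C with annihilation operators a_A, a_B, a_C). Then applying the sculpting operator Â = (−a_{1,1} + a_A)(−a_{2,1} + a_B)(a_{1,0} + a_C)(a_{2,0} − a_A + a_C)(a_A + a_B + a_C) to the initial state X_{1,+}X_{1,−}X_{2,+}X_{2,−}X_A X_B X_C yields ( a†_{1,0}a†_{2,0} + a†_{1,0}a†_{2,1} + a†_{1,1}a†_{2,0} − a†_{1,1}a†_{2,1} )·1, i.e. the polynomial (1/2)·[ (X_{1,+}+X_{1,−})(X_{2,+}+X_{2,−}) + (X_{1,+}+X_{1,−})(X_{2,+}−X_{2,−}) + (X_{1,+}−X_{1,−})(X_{2,+}+X_{2,−}) − (X_{1,+}−X_{1,−})(X_{2,+}−X_{2,−}) ], which encodes the two-qubit graph state |00⟩+|01⟩+|10⟩−|11⟩. -/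

import Mathlib

open MvPolynomial

/- Bargmann–Fock representation with 7 variables:
`X 0 = X_{1,+}`, `X 1 = X_{1,−}`, `X 2 = X_{2,+}`, `X 3 = X_{2,−}`,
`X 4 = X_A`, `X 5 = X_B`, `X 6 = X_C`. -/

/-- `a_{1,0} = (a_{1,+} + a_{1,−})/√2`. -/
noncomputable def a10 (p : MvPolynomial (Fin 7) ℂ) : MvPolynomial (Fin 7) ℂ :=
  (Real.sqrt 2 : ℂ)⁻¹ • (pderiv (0 : Fin 7) p + pderiv (1 : Fin 7) p)

/-- `a_{1,1} = (a_{1,+} − a_{1,−})/√2`. -/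
noncomputable def a11 (p : MvPolynomial (Fin 7) ℂ) : MvPolynomial (Fin 7) ℂ :=
  (Real.sqrt 2 : ℂ)⁻¹ • (pderiv (0 : Fin 7) p - pderiv (1 : Fin 7) p)

/-- `a_{2,0} = (a_{2,+} + a_{2,−})/√2`. -/
noncomputable def a20 (p : MvPolynomial (Fin 7) ℂ) : MvPolynomial (Fin 7) ℂ :=
  (Real.sqrt 2 : ℂ)⁻¹ • (pderiv (2 : Fin 7) p + pderiv (3 : Fin 7) p)

/-- `a_{2,1} = (a_{2,+} − a_{2,−})/√2`. -/
noncomputable def a21 (p : MvPolynomial (Fin 7) ℂ) : MvPolynomial (Fin 7) ℂ :=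
  (Real.sqrt 2 : ℂ)⁻¹ • (pderiv (2 : Fin 7) p - pderiv (3 : Fin 7) p)

/-- `a†_{1,0}`: multiplication by `(X_{1,+} + X_{1,−})/√2`. -/
noncomputable def ad10 (p : MvPolynomial (Fin 7) ℂ) : MvPolynomial (Fin 7) ℂ :=
  (Real.sqrt 2 : ℂ)⁻¹ • (X 0 * p + X 1 * p)

/-- `a†_{1,1}`: multiplication by `(X_{1,+} − X_{1,−})/√2`. -/
noncomputable def ad11 (p : MvPolynomial (Fin 7) ℂ) : MvPolynomial (Fin 7) ℂ :=
  (Real.sqrt 2 : ℂ)⁻¹ • (X 0 * p - X 1 * p)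

/-- `a†_{2,0}`: multiplication by `(X_{2,+} + X_{2,−})/√2`. -/
noncomputable def ad20 (p : MvPolynomial (Fin 7) ℂ) : MvPolynomial (Fin 7) ℂ :=
  (Real.sqrt 2 : ℂ)⁻¹ • (X 2 * p + X 3 * p)

/-- `a†_{2,1}`: multiplication by `(X_{2,+} − X_{2,−})/√2`. -/
noncomputable def ad21 (p : MvPolynomial (Fin 7) ℂ) : MvPolynomial (Fin 7) ℂ :=
  (Real.sqrt 2 : ℂ)⁻¹ • (X 2 * p - X 3 * p)

/-! Each factor of `Â` is a first-order differential operator with constant coefficients, so `Â`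
can be applied one factor at a time; every factor consumes one ancilla variable, and the
intermediate states stay small. The outcome is `2ν²(X₂(X₀ + X₁) + X₃(X₀ − X₁))` with
`ν = 1/√2`, as a polynomial identity in `ν`; the graph-state side expands to the same
expression, and only the last step uses `ν² = 1/2`. -/

lemma inv_sqrt_two_mul_self : (Real.sqrt 2 : ℂ)⁻¹ * (Real.sqrt 2 : ℂ)⁻¹ = 1 / 2 := by
  rw [← mul_inv, ← Complex.ofReal_mul, Real.mul_self_sqrt zero_le_two]
  norm_num

section Sculpting

local notation "ν" => ((Real.sqrt 2 : ℂ)⁻¹)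

lemma graph_state_eq :
    ad10 (ad20 1) + ad10 (ad21 1) + ad11 (ad20 1) - ad11 (ad21 1) =
      C ν * C ν * (2 * (X 2 * (X 0 + X 1) + X 3 * (X 0 - X 1))) := by
  simp only [ad10, ad11, ad20, ad21, smul_eq_C_mul]
  ring

lemma sculpting_operator_apply :
    (fun p => -a11 p + pderiv (4 : Fin 7) p)
        ((fun p => -a21 p + pderiv (5 : Fin 7) p)
          ((fun p => a10 p + pderiv (6 : Fin 7) p)
            ((fun p => a20 p - pderiv (4 : Fin 7) p + pderiv (6 : Fin 7) p)
              ((fun p => pderiv (4 : Fin 7) p + pderiv (5 : Fin 7) p + pderiv (6 : Fin 7) p)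
                (X 0 * X 1 * X 2 * X 3 * X 4 * X 5 * X 6))))) =
      C ν * C ν * (2 * (X 2 * (X 0 + X 1) + X 3 * (X 0 - X 1))) := by
  have hABC : (fun p : MvPolynomial (Fin 7) ℂ => pderiv 4 p + pderiv 5 p + pderiv 6 p)
      (X 0 * X 1 * X 2 * X 3 * X 4 * X 5 * X 6) =
      X 0 * X 1 * X 2 * X 3 * (X 5 * X 6 + X 4 * X 6 + X 4 * X 5) := ?_
  have h20AC : (fun p => a20 p - pderiv 4 p + pderiv 6 p)
      (X 0 * X 1 * X 2 * X 3 * (X 5 * X 6 + X 4 * X 6 + X 4 * X 5)) =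
      C ν * (X 0 * X 1 * (X 2 + X 3) * (X 5 * X 6 + X 4 * X 6 + X 4 * X 5)) +
        X 0 * X 1 * X 2 * X 3 * (X 4 - X 6) := ?_
  have h10C : (fun p => a10 p + pderiv 6 p)
      (C ν * (X 0 * X 1 * (X 2 + X 3) * (X 5 * X 6 + X 4 * X 6 + X 4 * X 5)) +
        X 0 * X 1 * X 2 * X 3 * (X 4 - X 6)) =
      C ν * C ν * ((X 0 + X 1) * (X 2 + X 3) * (X 5 * X 6 + X 4 * X 6 + X 4 * X 5)) +
        C ν * ((X 0 + X 1) * X 2 * X 3 * (X 4 - X 6)) +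
        C ν * (X 0 * X 1 * (X 2 + X 3) * (X 4 + X 5)) - X 0 * X 1 * X 2 * X 3 := ?_
  have h21B : (fun p => -a21 p + pderiv 5 p)
      (C ν * C ν * ((X 0 + X 1) * (X 2 + X 3) * (X 5 * X 6 + X 4 * X 6 + X 4 * X 5)) +
        C ν * ((X 0 + X 1) * X 2 * X 3 * (X 4 - X 6)) +
        C ν * (X 0 * X 1 * (X 2 + X 3) * (X 4 + X 5)) - X 0 * X 1 * X 2 * X 3) =
      C ν * C ν * ((X 0 + X 1) * ((X 2 - X 3) * (X 4 - X 6) + (X 2 + X 3) * (X 4 + X 6))) +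
        C ν * (X 0 * X 1 * ((X 2 + X 3) - (X 2 - X 3))) := ?_
  have h11A : (fun p => -a11 p + pderiv 4 p)
      (C ν * C ν * ((X 0 + X 1) * ((X 2 - X 3) * (X 4 - X 6) + (X 2 + X 3) * (X 4 + X 6))) +
        C ν * (X 0 * X 1 * ((X 2 + X 3) - (X 2 - X 3)))) =
      C ν * C ν * (2 * (X 2 * (X 0 + X 1) + X 3 * (X 0 - X 1))) := ?_
  · rw [hABC, h20AC, h10C, h21B, h11A]
  all_goals
    simp only [a10, a11, a20, a21, smul_eq_C_mul, map_add, map_sub, Derivation.leibniz,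
      derivation_C, pderiv_X, Pi.single_apply, smul_eq_mul]
    simp only [Fin.reduceEq, ↓reduceIte]
    ring

end Sculpting

/-- Heralded two-qubit (path length 1) graph state from the sculpting protocol:
applying `Â = (−a_{1,1}+a_A)(−a_{2,1}+a_B)(a_{1,0}+a_C)(a_{2,0}−a_A+a_C)(a_A+a_B+a_C)`
to `X_{1,+}X_{1,−}X_{2,+}X_{2,−}X_A X_B X_C` yields
`(a†_{1,0}a†_{2,0} + a†_{1,0}a†_{2,1} + a†_{1,1}a†_{2,0} − a†_{1,1}a†_{2,1})·1`,
i.e. the polynomial encoding `|00⟩+|01⟩+|10⟩−|11⟩`. -/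
theorem sculpting_bell_state :
    (fun p => -a11 p + pderiv (4 : Fin 7) p)
        ((fun p => -a21 p + pderiv (5 : Fin 7) p)
          ((fun p => a10 p + pderiv (6 : Fin 7) p)
            ((fun p => a20 p - pderiv (4 : Fin 7) p + pderiv (6 : Fin 7) p)
              ((fun p => pderiv (4 : Fin 7) p + pderiv (5 : Fin 7) p + pderiv (6 : Fin 7) p)
                (X 0 * X 1 * X 2 * X 3 * X 4 * X 5 * X 6))))) =
      ad10 (ad20 1) + ad10 (ad21 1) + ad11 (ad20 1) - ad11 (ad21 1) ∧
    ad10 (ad20 1) + ad10 (ad21 1) + ad11 (ad20 1) - ad11 (ad21 1) =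
      (1 / 2 : ℂ) •
        (((X 0 : MvPolynomial (Fin 7) ℂ) + X 1) * (X 2 + X 3) +
            (X 0 + X 1) * (X 2 - X 3) +
            (X 0 - X 1) * (X 2 + X 3) -
            (X 0 - X 1) * (X 2 - X 3)) := by
  refine ⟨sculpting_operator_apply.trans graph_state_eq.symm, ?_⟩
  rw [graph_state_eq, ← C_mul, inv_sqrt_two_mul_self, smul_eq_C_mul]
  ring
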